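/- Let G be a countable group and K a subgroup of G of finite index N with a complete set a₀,…,a_{N−1} of representatives of the left cosets of K in G. Let λ be the left regular representation of G on ℓ²(G), let p₁' be an orthogonal projection on ℓ²(G) commuting with λ(g) for all g ∈ G, let M := p₁'ℓ²(G), and let η ∈ M be such that {√N · λ(h)η : h ∈ K} is an orthonormal basis of M. Suppose ũ₀,…,ũ_{N−1} are unitary operators of M such that each ũᵢ commutes with λ(h)|_M for all h ∈ K, and ∑_{k=0}^{N−1} λ(a_k)ũᵢ(ũⱼ)*λ(a_k)* = 0 as operators on M whenever i ≠ j. Then: (1) for each i, {√N · λ(h)ũᵢη : h ∈ K} is an orthonormal basis of M; (2) ũ₀η,…,ũ_{N−1}η is a strongly disjoint N-tuple of Parseval frame vectors for M (with the representation g ↦ λ(g)|_M). -/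

import Mathlib

noncomputable section

open scoped ComplexConjugate

local notation "⟪" x ", " y "⟫" => @inner ℂ _ _ x y

/-- A group is ICC if every nontrivial conjugacy class is infinite. -/
def IsICC (G : Type*) [Group G] : Prop :=
  ∀ g : G, g ≠ 1 → {x : G | ∃ h : G, x = h * g * h⁻¹}.Infinite

variable {G : Type*} [Group G]
variable {H : Type*} [NormedAddCommGroup H] [InnerProductSpace ℂ H]

/-- `ξ` is a Parseval frame vector for the whole space `H`. -/
def IsParsevalFrameVector (π : G →* (H ≃ₗᵢ[ℂ] H)) (ξ : H) : Prop :=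
  ∀ f : H, ∑' g : G, ‖⟪f, π g ξ⟫‖ ^ 2 = ‖f‖ ^ 2

/-- `ξ` is a Parseval frame vector for the (closed) subspace `M` of `H`. -/
def IsParsevalFrameVectorIn (π : G →* (H ≃ₗᵢ[ℂ] H)) (ξ : H) (M : Submodule ℂ H) : Prop :=
  (∀ g : G, π g ξ ∈ M) ∧ ∀ f ∈ M, ∑' g : G, ‖⟪f, π g ξ⟫‖ ^ 2 = ‖f‖ ^ 2

/-- The closed linear span of the orbit `{π(g)ξ : g ∈ G}`. -/
def orbitSpan (π : G →* (H ≃ₗᵢ[ℂ] H)) (ξ : H) : Submodule ℂ H :=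
  (Submodule.span ℂ (Set.range fun g : G => π g ξ)).topologicalClosure

/-- `ξ₁, …, ξ_k` (with `ξ i` a Parseval frame vector for `M i`) form a strongly disjoint
`k`-tuple: `{π(g)ξ₁ ⊕ ⋯ ⊕ π(g)ξ_k : g ∈ G}` is a Parseval frame for `M₁ ⊕ ⋯ ⊕ M_k`. -/
def StronglyDisjointTuple {k : ℕ} (π : G →* (H ≃ₗᵢ[ℂ] H)) (ξ : Fin k → H)
    (M : Fin k → Submodule ℂ H) : Prop :=
  ∀ f : Fin k → H, (∀ i, f i ∈ M i) →
    ∑' g : G, ‖∑ i, ⟪f i, π g (ξ i)⟫‖ ^ 2 = ∑ i, ‖f i‖ ^ 2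

/-- `T` belongs to the commutant `π(G)'`. -/
def InCommutant (π : G →* (H ≃ₗᵢ[ℂ] H)) (T : H →L[ℂ] H) : Prop :=
  ∀ (g : G) (x : H), T (π g x) = π g (T x)

/-- The closed subspace `closure {T ξ : T ∈ π(G)'}`. -/
def commOrbit (π : G →* (H ≃ₗᵢ[ℂ] H)) (ξ : H) : Submodule ℂ H :=
  (Submodule.span ℂ {x : H | ∃ T : H →L[ℂ] H, InCommutant π T ∧ x = T ξ}).topologicalClosure

/-- `p` is the orthogonal projection of `H` onto the subspace `M`. -/
def IsOrthoProjOnto (M : Submodule ℂ H) (p : H →L[ℂ] H) : Prop :=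
  ∀ x : H, p x ∈ M ∧ x - p x ∈ Mᗮ

/-- `ζ` is a Bessel vector for the representation `π`. -/
def IsBesselVector (π : G →* (H ≃ₗᵢ[ℂ] H)) (ζ : H) : Prop :=
  ∃ B : ℝ, 0 < B ∧ ∀ f : H, ∀ s : Finset G, ∑ g ∈ s, ‖⟪f, π g ζ⟫‖ ^ 2 ≤ B * ‖f‖ ^ 2

/-- Strong disjointness of a Parseval frame vector `ξ` (for the subspace `M` of `H`, under `π`)
and `ζ` (for the subspace `M₂` of `H₂`, under `σ`), expressed by the vanishing of the mixed
sums `∑_g ⟨v, π(g)ξ⟩ conj ⟨w, σ(g)ζ⟩`. -/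
def StronglyDisjointPairIn (π : G →* (H ≃ₗᵢ[ℂ] H)) {H₂ : Type*} [NormedAddCommGroup H₂]
    [InnerProductSpace ℂ H₂] (σ : G →* (H₂ ≃ₗᵢ[ℂ] H₂)) (ξ : H) (ζ : H₂)
    (M : Submodule ℂ H) (M₂ : Submodule ℂ H₂) : Prop :=
  ∀ v ∈ M, ∀ w ∈ M₂, ∑' g : G, ⟪v, π g ξ⟫ * (starRingEnd ℂ) ⟪w, σ g ζ⟫ = 0

/-- A Riesz sequence: two-sided ℓ²-bounds on finite linear combinations. -/
def IsRieszSequence {J : Type*} (f : J → H) : Prop :=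
  ∃ A B : ℝ, 0 < A ∧ 0 < B ∧ ∀ c : J →₀ ℂ,
    A * ∑ j ∈ c.support, ‖c j‖ ^ 2 ≤ ‖∑ j ∈ c.support, c j • f j‖ ^ 2 ∧
    ‖∑ j ∈ c.support, c j • f j‖ ^ 2 ≤ B * ∑ j ∈ c.support, ‖c j‖ ^ 2


/-!
The vectors `√N λ(h)η`, `h ∈ K`, form an orthonormal basis of `M`, so for `x, y ∈ M` the sum over
`h ∈ K` of `⟨x, λ(h)η⟩⟨λ(h)η, y⟩` is `⟨x, y⟩ / N`. Since `ũᵢ` commutes with `λ(K)`, we have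
`⟨v, λ(h)ũᵢη⟩ = ⟨ũᵢ* v, λ(h)η⟩`, and splitting `G` into the cosets `a_k K` gives
`∑_g ⟨v, λ(g)ũᵢη⟩ conj ⟨w, λ(g)ũⱼη⟩ = ⟨∑_k λ(a_k) ũⱼ ũᵢ* λ(a_k)* v, w⟩ / N`,
which is `⟨v, w⟩` for `i = j` (as `ũᵢ ũᵢ*` is the identity on the invariant subspace `M`) and `0`
for `i ≠ j`. Parseval's identity and strong disjointness are the diagonal and the full case of this
identity, and the basis `√N λ(h)ũᵢη` is the image of the basis `√N λ(h)η` under the unitary `ũᵢ`.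
-/
open Submodule in
theorem Orthonormal.hasSum_inner_mul_inner {𝕜 E ι : Type*} [RCLike 𝕜] [NormedAddCommGroup E]
    [InnerProductSpace 𝕜 E] [CompleteSpace E] {e : ι → E} (he : Orthonormal 𝕜 e) {x y : E}
    (hx : x ∈ (span 𝕜 (Set.range e)).topologicalClosure)
    (hy : y ∈ (span 𝕜 (Set.range e)).topologicalClosure) :
    HasSum (fun i => inner 𝕜 x (e i) * inner 𝕜 (e i) y) (inner 𝕜 x y) := by
  set M := (span 𝕜 (Set.range e)).topologicalClosure
  let e' : ι → M := fun i => ⟨e i, le_topologicalClosure _ (subset_span ⟨i, rfl⟩)⟩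
  have he' : Orthonormal 𝕜 e' := M.subtypeₗᵢ.orthonormal_comp_iff.mp he
  have hdense : ⊤ ≤ (span 𝕜 (Set.range e')).topologicalClosure := by
    rw [top_le_iff, ← dense_iff_topologicalClosure_eq_top, Subtype.dense_iff]
    have hspan : span 𝕜 (Set.range e) = (span 𝕜 (Set.range e')).map M.subtype := by
      rw [Submodule.map_span, ← Set.range_comp]
      rfl
    exact (topologicalClosure_coe _).le.trans (closure_mono (hspan ▸ subset_rfl))
  simpa [e', HilbertBasis.coe_mk] using
    (HilbertBasis.mk he' hdense).hasSum_inner_mul_inner ⟨x, hx⟩ ⟨y, hy⟩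

open Submodule in
theorem hasSum_inner_mul_inner_of_orthonormal_smul {𝕜 E ι : Type*} [RCLike 𝕜]
    [NormedAddCommGroup E] [InnerProductSpace 𝕜 E] [CompleteSpace E] {c : 𝕜} (hc : c ≠ 0)
    {e : ι → E} (he : Orthonormal 𝕜 fun i => c • e i) {x y : E}
    (hx : x ∈ (span 𝕜 (Set.range e)).topologicalClosure)
    (hy : y ∈ (span 𝕜 (Set.range e)).topologicalClosure) :
    HasSum (fun i => inner 𝕜 x (e i) * inner 𝕜 (e i) y) ((c * conj c)⁻¹ * inner 𝕜 x y) := by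
  have hc' : c * conj c ≠ 0 := mul_ne_zero hc (by simpa using hc)
  have hspan : span 𝕜 (Set.range fun i => c • e i) = span 𝕜 (Set.range e) := by
    rw [Set.range_smul, span_smul_eq_of_isUnit _ _ hc.isUnit]
  rw [← hspan] at hx hy
  rw [← hasSum_mul_left_iff hc', mul_inv_cancel_left₀ hc']
  convert he.hasSum_inner_mul_inner hx hy using 2 with i
  rw [inner_smul_right, inner_smul_left]
  ring

theorem Subgroup.bijective_mul_of_existsUnique_inv_mul_mem {G ι : Type*} [Group G] {K : Subgroup G}
    {a : ι → G} (ha : ∀ g, ∃! k, (a k)⁻¹ * g ∈ K) :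
    Function.Bijective fun p : ι × K => a p.1 * p.2 := by
  refine (Function.bijective_iff_existsUnique _).mpr fun g => ?_
  obtain ⟨k, hk, hk_unique⟩ := ha g
  refine ⟨(k, ⟨_, hk⟩), by simp, ?_⟩
  rintro ⟨k', h⟩ rfl
  obtain rfl : k' = k := hk_unique k' (by simp)
  simp

theorem hasSum_prod_of_forall_hasSum {α ι κ : Type*} [AddCommMonoid α] [TopologicalSpace α]
    [ContinuousAdd α] [Fintype ι] {f : ι × κ → α} {s : ι → α}
    (hf : ∀ i, HasSum (fun k => f (i, k)) (s i)) : HasSum f (∑ i, s i) := by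
  classical
  have hfiber : ∀ i, HasSum (fun p : ι × κ => if p.1 = i then f p else 0) (s i) := fun i =>
    ((Prod.mk_right_injective i).hasSum_iff (by rintro ⟨j, k⟩ hp; grind)).mp
      (by simpa [Function.comp_def] using hf i)
  simpa using hasSum_sum (s := Finset.univ) fun i _ => hfiber i

theorem Subgroup.hasSum_of_existsUnique_inv_mul_mem {G ι α : Type*} [Group G] [Fintype ι]
    [AddCommMonoid α] [TopologicalSpace α] [ContinuousAdd α] {K : Subgroup G} {a : ι → G}
    (ha : ∀ g, ∃! k, (a k)⁻¹ * g ∈ K) {f : G → α} {s : ι → α}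
    (hf : ∀ k, HasSum (fun h : K => f (a k * h)) (s k)) : HasSum f (∑ k, s k) :=
  (Equiv.ofBijective _ (Subgroup.bijective_mul_of_existsUnique_inv_mul_mem ha)).hasSum_iff.mp
    (hasSum_prod_of_forall_hasSum hf)

open Submodule in
theorem topologicalClosure_span_image_eq {𝕜 E F : Type*} [RCLike 𝕜] [NormedAddCommGroup E]
    [NormedAddCommGroup F] [NormedSpace 𝕜 E] [NormedSpace 𝕜 F] {T : E →L[𝕜] F} {s : Set E}
    {M : Submodule 𝕜 E} {M' : Submodule 𝕜 F} (hs : (span 𝕜 s).topologicalClosure = M)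
    (hT : M.map (T : E →ₗ[𝕜] F) = M') (hM' : IsClosed (M' : Set F)) :
    (span 𝕜 (T '' s)).topologicalClosure = M' := by
  refine le_antisymm (topologicalClosure_minimal _ ?_ hM') ?_
  · rw [span_le, Set.image_subset_iff]
    exact fun x hx => hT.le ⟨x, hs ▸ le_topologicalClosure _ (subset_span hx), rfl⟩
  · calc M' = M.map (T : E →ₗ[𝕜] F) := hT.symm
      _ ≤ _ := hs ▸ topologicalClosure_map T _
      _ = _ := by rw [map_span, ContinuousLinearMap.coe_coe]

theorem Orthonormal.apply_of_adjoint_apply_apply {𝕜 E F ι : Type*} [RCLike 𝕜]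
    [NormedAddCommGroup E] [NormedAddCommGroup F] [InnerProductSpace 𝕜 E] [InnerProductSpace 𝕜 F]
    [CompleteSpace E] [CompleteSpace F] {e : ι → E} (he : Orthonormal 𝕜 e) {T : E →L[𝕜] F}
    (hT : ∀ i, ContinuousLinearMap.adjoint T (T (e i)) = e i) :
    Orthonormal 𝕜 fun i => T (e i) := by
  classical
  rw [orthonormal_iff_ite] at he ⊢
  intro i j
  rw [← ContinuousLinearMap.adjoint_inner_left, hT, he]

section Projection

variable {M : Submodule ℂ H}

theorem IsOrthoProjOnto.eq_starProjection [M.HasOrthogonalProjection] {p : H →L[ℂ] H}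
    (hp : IsOrthoProjOnto M p) : p = M.starProjection :=
  ContinuousLinearMap.ext fun x =>
    (Submodule.eq_starProjection_of_mem_orthogonal (hp x).1 (hp x).2).symm

variable [M.HasOrthogonalProjection]

theorem apply_mem_of_starProjection_comp_eq {T : H →L[ℂ] H} (hT : M.starProjection ∘L T = T)
    (x : H) : T x ∈ M := by
  rw [← hT]
  exact M.starProjection_apply_mem _

theorem adjoint_apply_mem_of_comp_starProjection_eq [CompleteSpace H] {T : H →L[ℂ] H}
    (hT : T ∘L M.starProjection = T) (x : H) : ContinuousLinearMap.adjoint T x ∈ M := by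
  refine apply_mem_of_starProjection_comp_eq ?_ x
  conv_rhs => rw [← hT]
  rw [ContinuousLinearMap.adjoint_comp, (isSelfAdjoint_starProjection M).adjoint_eq]

theorem apply_apply_of_comp_eq_starProjection {A B : H →L[ℂ] H} (h : A ∘L B = M.starProjection)
    {x : H} (hx : x ∈ M) : A (B x) = x := by
  rw [← ContinuousLinearMap.comp_apply, h, Submodule.starProjection_eq_self_iff.mpr hx]

theorem apply_mem_of_commute_starProjection {G : Type*} [Group G] {lam : G →* (H ≃ₗᵢ[ℂ] H)}
    (hcomm : ∀ (g : G) (x : H), M.starProjection (lam g x) = lam g (M.starProjection x))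
    (g : G) {x : H} (hx : x ∈ M) : lam g x ∈ M := by
  rw [← Submodule.starProjection_eq_self_iff, hcomm, Submodule.starProjection_eq_self_iff.mpr hx]

end Projection

theorem hasSum_norm_sq_of_hasSum_mul_conj {ι : Type*} {z : ι → ℂ} {r : ℝ}
    (h : HasSum (fun i => z i * conj (z i)) r) : HasSum (fun i => ‖z i‖ ^ 2) r := by
  simpa only [Complex.mul_conj', ← Complex.ofReal_pow, Complex.hasSum_ofReal] using h

section Frames

variable {π : G →* (H ≃ₗᵢ[ℂ] H)}

theorem isParsevalFrameVectorIn_of_hasSum {ξ : H} {M : Submodule ℂ H} (hξ : ∀ g, π g ξ ∈ M)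
    (h : ∀ v ∈ M, HasSum (fun g => ⟪v, π g ξ⟫ * conj ⟪v, π g ξ⟫) ⟪v, v⟫) :
    IsParsevalFrameVectorIn π ξ M := by
  refine ⟨hξ, fun v hv => (hasSum_norm_sq_of_hasSum_mul_conj ?_).tsum_eq⟩
  have := h v hv
  rw [inner_self_eq_norm_sq_to_K] at this
  exact_mod_cast this

theorem stronglyDisjointTuple_of_hasSum {k : ℕ} {ξ : Fin k → H} {M : Fin k → Submodule ℂ H}
    (h : ∀ i j, ∀ v ∈ M i, ∀ w ∈ M j,
      HasSum (fun g => ⟪v, π g (ξ i)⟫ * conj ⟪w, π g (ξ j)⟫) (if i = j then ⟪v, w⟫ else 0)) :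
    StronglyDisjointTuple π ξ M := by
  intro f hf
  refine (hasSum_norm_sq_of_hasSum_mul_conj ?_).tsum_eq
  have := hasSum_sum (s := Finset.univ) fun i _ =>
    hasSum_sum (s := Finset.univ) fun j _ => h i j _ (hf i) _ (hf j)
  simpa [map_sum, Finset.sum_mul_sum, inner_self_eq_norm_sq_to_K] using this

end Frames

section Orbit

open Submodule ContinuousLinearMap

variable {lam : G →* (H ≃ₗᵢ[ℂ] H)} {K : Subgroup G} {M : Submodule ℂ H}
  {η : H} {N : ℕ}

theorem topologicalClosure_span_orbit_apply
    (hdense : (span ℂ (Set.range fun h : K => lam h η)).topologicalClosure = M)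
    {T : H →L[ℂ] H} (hT : ∀ (h : K) (x : H), T (lam h x) = lam h (T x))
    (hTM : M.map (T : H →ₗ[ℂ] H) = M) :
    (span ℂ (Set.range fun h : K => lam h (T η))).topologicalClosure = M := by
  have hrange : (Set.range fun h : K => lam h (T η)) = T '' Set.range fun h : K => lam h η := by
    rw [← Set.range_comp]
    exact congrArg Set.range (funext fun h => (hT h η).symm)
  rw [hrange]
  exact topologicalClosure_span_image_eq hdense hTM (hdense ▸ isClosed_topologicalClosure _)

variable [CompleteSpace H]

theorem orthonormal_orbit_apply {c : ℂ} (hON : Orthonormal ℂ fun h : K => c • lam h η)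
    (hdense : (span ℂ (Set.range fun h : K => lam h η)).topologicalClosure = M) {T : H →L[ℂ] H}
    (hT : ∀ (h : K) (x : H), T (lam h x) = lam h (T x))
    (hTT : ∀ x ∈ M, adjoint T (T x) = x) :
    Orthonormal ℂ fun h : K => c • lam h (T η) := by
  have hfun : (fun h : K => c • lam h (T η)) = fun h : K => T (c • lam h η) :=
    funext fun h => by rw [map_smul, hT]
  rw [hfun]
  exact hON.apply_of_adjoint_apply_apply fun h =>
    hTT _ (M.smul_mem c (hdense ▸ le_topologicalClosure _ (subset_span ⟨h, rfl⟩)))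

theorem hasSum_inner_orbit_mul_conj (hN : 0 < N)
    (hON : Orthonormal ℂ fun h : K => (Real.sqrt N : ℂ) • lam h η)
    (hdense : (span ℂ (Set.range fun h : K => lam h η)).topologicalClosure = M)
    {S T : H →L[ℂ] H} (hS : ∀ (h : K) (x : H), S (lam h x) = lam h (S x))
    (hT : ∀ (h : K) (x : H), T (lam h x) = lam h (T x))
    (hSM : ∀ x, adjoint S x ∈ M) (hTM : ∀ x, adjoint T x ∈ M) (v w : H) :
    HasSum (fun h : K => ⟪v, lam h (S η)⟫ * conj ⟪w, lam h (T η)⟫)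
      ((N : ℂ)⁻¹ * ⟪adjoint S v, adjoint T w⟫) := by
  have hc : (Real.sqrt N : ℂ) * conj (Real.sqrt N : ℂ) = N := by
    rw [Complex.conj_ofReal, ← Complex.ofReal_mul, Real.mul_self_sqrt (Nat.cast_nonneg N),
      Complex.ofReal_natCast]
  have key := hasSum_inner_mul_inner_of_orthonormal_smul
    (by simpa using hN.ne') hON (hdense ▸ hSM v) (hdense ▸ hTM w)
  rw [hc] at key
  have hterm : ∀ h : K, ⟪v, lam h (S η)⟫ * conj ⟪w, lam h (T η)⟫ =
      ⟪adjoint S v, lam h η⟫ * ⟪lam h η, adjoint T w⟫ := fun h => by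
    rw [← hS, ← hT, ← adjoint_inner_left, inner_conj_symm, adjoint_inner_right]
  simpa only [hterm] using key

theorem hasSum_inner_mul_conj_of_transversal {ι : Type*} [Fintype ι] {a : ι → G}
    (ha : ∀ g, ∃! k, (a k)⁻¹ * g ∈ K) (hN : 0 < N)
    (hON : Orthonormal ℂ fun h : K => (Real.sqrt N : ℂ) • lam h η)
    (hdense : (span ℂ (Set.range fun h : K => lam h η)).topologicalClosure = M)
    {S T : H →L[ℂ] H} (hS : ∀ (h : K) (x : H), S (lam h x) = lam h (S x))
    (hT : ∀ (h : K) (x : H), T (lam h x) = lam h (T x))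
    (hSM : ∀ x, adjoint S x ∈ M) (hTM : ∀ x, adjoint T x ∈ M) (v w : H) :
    HasSum (fun g => ⟪v, lam g (S η)⟫ * conj ⟪w, lam g (T η)⟫)
      ((N : ℂ)⁻¹ * ⟪∑ k, lam (a k) (T (adjoint S ((lam (a k)).symm v))), w⟫) := by
  rw [sum_inner, Finset.mul_sum]
  refine K.hasSum_of_existsUnique_inv_mul_mem ha fun k => ?_
  convert hasSum_inner_orbit_mul_conj hN hON hdense hS hT hSM hTM
    ((lam (a k)).symm v) ((lam (a k)).symm w) using 2 with h
  · simp only [map_mul, LinearIsometryEquiv.coe_mul, Function.comp_apply,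
      LinearIsometryEquiv.inner_map_eq_flip, LinearIsometryEquiv.symm_symm]
  · rw [adjoint_inner_right, LinearIsometryEquiv.inner_map_eq_flip]

theorem hasSum_inner_mul_conj_eq_ite {a : Fin N → G}
    (ha : ∀ g, ∃! k, (a k)⁻¹ * g ∈ K) (hN : 0 < N)
    (hON : Orthonormal ℂ fun h : K => (Real.sqrt N : ℂ) • lam h η)
    (hdense : (span ℂ (Set.range fun h : K => lam h η)).topologicalClosure = M)
    (hMinv : ∀ (g : G) {x : H}, x ∈ M → lam g x ∈ M) {ι : Type*} [DecidableEq ι]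
    {u : ι → H →L[ℂ] H}
    (hcomm : ∀ i, ∀ (h : K) (x : H), u i (lam h x) = lam h (u i x))
    (hAM : ∀ i x, adjoint (u i) x ∈ M) (hUA : ∀ i, ∀ x ∈ M, u i (adjoint (u i) x) = x)
    (hzero : ∀ i j, i ≠ j → ∀ x : H,
      ∑ k, lam (a k) (u i (adjoint (u j) ((lam (a k)).symm x))) = 0)
    (i j : ι) {v : H} (hv : v ∈ M) (w : H) :
    HasSum (fun g => ⟪v, lam g (u i η)⟫ * conj ⟪w, lam g (u j η)⟫)
      (if i = j then ⟪v, w⟫ else 0) := by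
  convert hasSum_inner_mul_conj_of_transversal ha hN hON hdense (hcomm i) (hcomm j) (hAM i) (hAM j)
    v w using 1
  split_ifs with hij
  · subst hij
    have hsymm (k : Fin N) : (lam (a k)).symm v ∈ M := by simpa [map_inv] using hMinv (a k)⁻¹ hv
    simp only [hUA i _ (hsymm _), LinearIsometryEquiv.apply_symm_apply, Finset.sum_const,
      Finset.card_univ, Fintype.card_fin, ← Nat.cast_smul_eq_nsmul ℂ, inner_smul_left,
      Complex.conj_natCast]
    rw [inv_mul_cancel_left₀ (Nat.cast_ne_zero.mpr hN.ne')]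
  · rw [hzero j i (Ne.symm hij), inner_zero_left, mul_zero]

end Orbit

theorem stmt15_general {G : Type*} [Group G]
    {H : Type*} [NormedAddCommGroup H] [InnerProductSpace ℂ H] [CompleteSpace H]
    (lam : G →* (H ≃ₗᵢ[ℂ] H))
    (K : Subgroup G) (N : ℕ) (hN : 0 < N)
    (a : Fin N → G) (ha : ∀ g : G, ∃! k : Fin N, (a k)⁻¹ * g ∈ K)
    (p₁ : H →L[ℂ] H) (M : Submodule ℂ H) (hp₁ : IsOrthoProjOnto M p₁)
    (hp₁comm : ∀ (g : G) (x : H), p₁ (lam g x) = lam g (p₁ x))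
    (η : H)
    (hON : Orthonormal ℂ (fun h : K => (Real.sqrt N : ℂ) • lam (h : G) η))
    (hdense : (Submodule.span ℂ (Set.range fun h : K => lam (h : G) η)).topologicalClosure = M)
    (u : Fin N → (H →L[ℂ] H))
    (hsupp : ∀ i, (u i) ∘L p₁ = u i ∧ p₁ ∘L (u i) = u i)
    (huni : ∀ i, (ContinuousLinearMap.adjoint (u i)) ∘L (u i) = p₁ ∧
      (u i) ∘L (ContinuousLinearMap.adjoint (u i)) = p₁)
    (hcomm : ∀ i, ∀ h : K, ∀ x : H, u i (lam (h : G) x) = lam (h : G) (u i x))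
    (hzero : ∀ i j, i ≠ j → ∀ x : H,
      ∑ k, lam (a k) ((u i) ((ContinuousLinearMap.adjoint (u j)) ((lam (a k)).symm x))) = 0) :
    (∀ i, Orthonormal ℂ (fun h : K => (Real.sqrt N : ℂ) • lam (h : G) (u i η)) ∧
      (Submodule.span ℂ
        (Set.range fun h : K => lam (h : G) (u i η))).topologicalClosure = M) ∧
    (∀ i, IsParsevalFrameVectorIn lam (u i η) M) ∧
    StronglyDisjointTuple lam (fun i => u i η) (fun _ => M) := by
  have : CompleteSpace M :=
    (hdense ▸ Submodule.isClosed_topologicalClosure _ : IsClosed (M : Set H)).completeSpace_coe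
  obtain rfl := hp₁.eq_starProjection
  have hMinv := apply_mem_of_commute_starProjection hp₁comm
  have huM i := apply_mem_of_starProjection_comp_eq (hsupp i).2
  have hAM i := adjoint_apply_mem_of_comp_starProjection_eq (hsupp i).1
  have hUA (i) : ∀ x ∈ M, u i (ContinuousLinearMap.adjoint (u i) x) = x :=
    fun _ => apply_apply_of_comp_eq_starProjection (huni i).2
  have hgram := hasSum_inner_mul_conj_eq_ite ha hN hON hdense hMinv hcomm hAM hUA hzero
  have hmap (i : Fin N) : M.map (u i : H →ₗ[ℂ] H) = M :=
    le_antisymm (Submodule.map_le_iff_le_comap.mpr fun x _ => huM i x)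
      fun x hx => ⟨_, hAM i x, hUA i x hx⟩
  exact ⟨fun i => ⟨orthonormal_orbit_apply hON hdense (hcomm i)
      fun _ => apply_apply_of_comp_eq_starProjection (huni i).1,
      topologicalClosure_span_orbit_apply hdense (hcomm i) (hmap i)⟩,
    fun i => isParsevalFrameVectorIn_of_hasSum (fun g => hMinv g (huM i η))
      fun v hv => by simpa using hgram i i hv v,
    stronglyDisjointTuple_of_hasSum fun i j v hv w _ => hgram i j hv w⟩

theorem stmt15 {G : Type*} [Group G] [Countable G]
    {H : Type*} [NormedAddCommGroup H] [InnerProductSpace ℂ H] [CompleteSpace H]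
    (δ : G → H) (hδon : Orthonormal ℂ δ)
    (hδdense : (Submodule.span ℂ (Set.range δ)).topologicalClosure = ⊤)
    (lam : G →* (H ≃ₗᵢ[ℂ] H)) (hlam : ∀ g h : G, lam g (δ h) = δ (g * h))
    (K : Subgroup G) (N : ℕ) (hN : 0 < N) (hidx : K.index = N)
    (a : Fin N → G) (ha : ∀ g : G, ∃! k : Fin N, (a k)⁻¹ * g ∈ K)
    (p₁ : H →L[ℂ] H) (M : Submodule ℂ H) (hp₁ : IsOrthoProjOnto M p₁)
    (hp₁comm : ∀ (g : G) (x : H), p₁ (lam g x) = lam g (p₁ x))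
    (η : H) (hηM : η ∈ M)
    (hON : Orthonormal ℂ (fun h : K => (Real.sqrt N : ℂ) • lam (h : G) η))
    (hdense : (Submodule.span ℂ (Set.range fun h : K => lam (h : G) η)).topologicalClosure = M)
    (u : Fin N → (H →L[ℂ] H))
    (hsupp : ∀ i, (u i) ∘L p₁ = u i ∧ p₁ ∘L (u i) = u i)
    (huni : ∀ i, (ContinuousLinearMap.adjoint (u i)) ∘L (u i) = p₁ ∧
      (u i) ∘L (ContinuousLinearMap.adjoint (u i)) = p₁)
    (hcomm : ∀ i, ∀ h : K, ∀ x : H, u i (lam (h : G) x) = lam (h : G) (u i x))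
    (hzero : ∀ i j, i ≠ j → ∀ x : H,
      ∑ k, lam (a k) ((u i) ((ContinuousLinearMap.adjoint (u j)) ((lam (a k)).symm x))) = 0) :
    (∀ i, Orthonormal ℂ (fun h : K => (Real.sqrt N : ℂ) • lam (h : G) (u i η)) ∧
      (Submodule.span ℂ
        (Set.range fun h : K => lam (h : G) (u i η))).topologicalClosure = M) ∧
    (∀ i, IsParsevalFrameVectorIn lam (u i η) M) ∧
    StronglyDisjointTuple lam (fun i => u i η) (fun _ => M) :=
  stmt15_general lam K N hN a ha p₁ M hp₁ hp₁comm η hON hdense u hsupp huni hcomm hzero
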